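/- arXiv:2003.12491 — 6 statements merged into one kernel-verified Lean document; each statement's English description precedes it below -/
import Mathlib

section
/- For every integer n ≥ 2 and every integer ℓ with 0 ≤ ℓ ≤ q−2, S_{α^ℓ} = (1/(q−1)) ( ∑_{μ=1}^{q−2} G(χ^μ) ζ^{−μℓ} a_μ − q/2 ). -/
open Finset

noncomputable section CarletFeng

/-- The absolute trace from a finite field of characteristic two to `F₂`. -/
def cfTr (F : Type) [Field F] [Fintype F] [Algebra (ZMod 2) F] (x : F) : ZMod 2 :=
  Algebra.trace (ZMod 2) F x

/-- `(-1) ^ Tr(x)` as a complex number. -/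
def cfSgn (F : Type) [Field F] [Fintype F] [Algebra (ZMod 2) F] (x : F) : ℂ :=
  (-1) ^ (cfTr F x).val

/-- `ζ = exp(2πi/(q-1))` with `q = 2^n`. -/
def cfZeta (n : ℕ) : ℂ := Complex.exp (2 * Real.pi * Complex.I / ((2 : ℂ) ^ n - 1))

/-- The Gauss sum `G(a, χ^μ) = ∑_{x ∈ F_q^*} χ^μ(x) (-1)^{Tr(ax)}`. -/
def cfGauss {F : Type} [Field F] [Fintype F] [DecidableEq F] [Algebra (ZMod 2) F]
    (χ : Fˣ →* ℂ) (a : Fˣ) (μ : ℕ) : ℂ :=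
  ∑ x : Fˣ, (χ x) ^ μ * cfSgn F ((a : F) * (x : F))

/-- `a_μ = (ζ^{-μ(q/2-1)} - 1)/(1 - ζ^{-μ})`. -/
def cfA (n : ℕ) (μ : ℕ) : ℂ :=
  (cfZeta n ^ (-((μ : ℤ) * ((2 : ℤ) ^ (n - 1) - 1))) - 1) / (1 - cfZeta n ^ (-(μ : ℤ)))

/-- `S_λ = ∑_{i=2^{n-1}-1}^{2^n-2} (-1)^{Tr(λ α^i)}`. -/
def cfS (n : ℕ) {F : Type} [Field F] [Fintype F] [Algebra (ZMod 2) F]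
    (α lam : Fˣ) : ℂ :=
  ∑ i ∈ Finset.Icc (2 ^ (n - 1) - 1) (2 ^ n - 2), cfSgn F ((lam : F) * (α : F) ^ i)

end CarletFeng

section CFAux

lemma cf_sgn_zero (F : Type) [Field F] [Fintype F] [Algebra (ZMod 2) F] :
    cfSgn F 0 = 1 := by
  simp [cfSgn, cfTr]

lemma cf_sgn_add (F : Type) [Field F] [Fintype F] [Algebra (ZMod 2) F] (x y : F) :
    cfSgn F (x + y) = cfSgn F x * cfSgn F y := by
  unfold cfSgn
  have h : cfTr F (x + y) = cfTr F x + cfTr F y := by simp [cfTr]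
  rw [h]
  generalize cfTr F x = a
  generalize cfTr F y = b
  rw [ZMod.val_add, ← neg_one_pow_eq_pow_mod_two, pow_add]

lemma cf_exists_tr_one (F : Type) [Field F] [Fintype F] [Algebra (ZMod 2) F] :
    ∃ a : F, cfTr F a = 1 := by
  by_contra hcon
  push_neg at hcon
  have h0 : ∀ a : F, cfTr F a = 0 := by
    intro a
    have := hcon a
    have h2 : ∀ x : ZMod 2, x ≠ 1 → x = 0 := by decide
    exact h2 _ this
  have hnd := traceForm_nondegenerate (ZMod 2) F
  have h1 : (1 : F) = 0 := by
    apply hnd.1 1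
    intro y
    simpa [Algebra.traceForm_apply, cfTr] using h0 y
  exact one_ne_zero h1

lemma cf_sum_sgn_field (F : Type) [Field F] [Fintype F] [Algebra (ZMod 2) F] :
    ∑ x : F, cfSgn F x = 0 := by
  obtain ⟨a, ha⟩ := cf_exists_tr_one F
  have hsa : cfSgn F a = -1 := by
    rw [cfSgn, ha, show (1 : ZMod 2).val = 1 from rfl, pow_one]
  have key : ∑ x : F, cfSgn F x = -∑ x : F, cfSgn F x := by
    calc ∑ x : F, cfSgn F x = ∑ x : F, cfSgn F (x + a) :=
          (Fintype.sum_equiv (Equiv.addRight a) (fun x => cfSgn F (x + a))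
            (fun x => cfSgn F x) (fun x => rfl)).symm
      _ = ∑ x : F, cfSgn F x * cfSgn F a := by simp [cf_sgn_add]
      _ = -∑ x : F, cfSgn F x := by rw [← Finset.sum_mul, hsa]; ring
  linear_combination key / 2

lemma cf_sum_sgn_units (F : Type) [Field F] [Fintype F] [DecidableEq F] [Algebra (ZMod 2) F] :
    ∑ x : Fˣ, cfSgn F (x : F) = -1 := by
  have himg : (Finset.univ.image (Units.val : Fˣ → F)) = Finset.univ.erase 0 := by
    ext y
    constructor
    · intro hy
      obtain ⟨x, -, rfl⟩ := Finset.mem_image.mp hy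
      exact Finset.mem_erase.mpr ⟨x.ne_zero, Finset.mem_univ _⟩
    · intro hy
      exact Finset.mem_image.mpr
        ⟨Units.mk0 y (Finset.mem_erase.mp hy).1, Finset.mem_univ _, rfl⟩
  have h2 : ∑ x : Fˣ, cfSgn F (x : F) = ∑ y ∈ Finset.univ.erase 0, cfSgn F y := by
    rw [← himg, Finset.sum_image (fun a _ b _ h => Units.ext h)]
  have h3 := Finset.add_sum_erase Finset.univ (cfSgn F) (Finset.mem_univ (0 : F))
  rw [cf_sum_sgn_field F, cf_sgn_zero F] at h3
  rw [h2]
  linear_combination h3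

lemma cf_zeta_primitive (n : ℕ) (hn : 1 ≤ n) :
    IsPrimitiveRoot (cfZeta n) (2 ^ n - 1) := by
  have h1 : (1 : ℕ) ≤ 2 ^ n := Nat.one_le_two_pow
  have h0 : (2 : ℕ) ^ n - 1 ≠ 0 := by
    have : (2:ℕ) ^ 1 ≤ 2 ^ n := Nat.pow_le_pow_right (by norm_num) hn
    omega
  have hcast : (((2 : ℕ) ^ n - 1 : ℕ) : ℂ) = (2 : ℂ) ^ n - 1 := by
    rw [Nat.cast_sub h1]; push_cast; ring
  have := Complex.isPrimitiveRoot_exp (2 ^ n - 1) h0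
  rwa [hcast] at this

end CFAux

/-- For every integer `n ≥ 2` and every `0 ≤ ℓ ≤ q-2`,
`S_{α^ℓ} = (1/(q-1)) ( ∑_{μ=1}^{q-2} G(χ^μ) ζ^{-μℓ} a_μ − q/2 )`. -/
theorem stmt_2 (n : ℕ) (hn : 2 ≤ n)
    (F : Type) [Field F] [Fintype F] [DecidableEq F] [Algebra (ZMod 2) F]
    (hF : Fintype.card F = 2 ^ n)
    (α : Fˣ) (hα : ∀ x : Fˣ, x ∈ Subgroup.zpowers α)
    (χ : Fˣ →* ℂ) (hχ : χ α = cfZeta n)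
    (ℓ : ℕ) (hℓ : ℓ ≤ 2 ^ n - 2) :
    cfS n α (α ^ ℓ) =
      (1 / ((2 : ℂ) ^ n - 1)) *
        ((∑ μ ∈ Finset.Icc 1 (2 ^ n - 2),
            cfGauss χ 1 μ * cfZeta n ^ (-((μ : ℤ) * (ℓ : ℤ))) * cfA n μ)
          - (2 : ℂ) ^ n / 2) := by
  -- basic numerology
  have hq4 : (4:ℕ) ≤ 2 ^ n := by
    calc (4:ℕ) = 2 ^ 2 := by norm_num
      _ ≤ 2 ^ n := Nat.pow_le_pow_right (by norm_num) hn
  have hhalf : 2 ^ n = 2 * 2 ^ (n - 1) := by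
    rw [← pow_succ']
    congr 1
    omega
  have hhalf2 : (2:ℕ) ≤ 2 ^ (n-1) := by omega
  set N : ℕ := 2 ^ n - 1 with hNdef
  have hN3 : 3 ≤ N := by omega
  have hN0 : N ≠ 0 := by omega
  -- the primitive root
  have hζ : IsPrimitiveRoot (cfZeta n) N := cf_zeta_primitive n (by omega)
  set ζ : ℂ := cfZeta n with hzdef
  set ξ : ℂ := ζ⁻¹ with hxidef
  have hξ : IsPrimitiveRoot ξ N := hζ.inv
  have hζξ : ∀ m : ℕ, ζ ^ (-(m:ℤ)) = ξ ^ m := by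
    intro m
    rw [zpow_neg, zpow_natCast, hxidef, inv_pow]
  have hξN : ξ ^ N = 1 := hξ.pow_eq_one
  -- cardinality facts
  have hcard : Fintype.card Fˣ = N := by rw [Fintype.card_units, hF]
  have hxN : ∀ x : Fˣ, x ^ N = 1 := fun x => by rw [← hcard]; exact pow_card_eq_one
  -- every unit is a natural power of α
  have hpow : ∀ x : Fˣ, ∃ m : ℕ, x = α ^ m := by
    intro x
    obtain ⟨k, hk⟩ := Subgroup.mem_zpowers_iff.mp (hα x)
    refine ⟨(k % (N:ℤ)).toNat, ?_⟩
    have hNz : (0:ℤ) < (N:ℤ) := by exact_mod_cast Nat.pos_of_ne_zero hN0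
    have h1 : α ^ ((N:ℤ)) = 1 := by rw [zpow_natCast]; exact hxN α
    rw [← hk]
    conv_lhs => rw [show k = (N:ℤ) * (k / (N:ℤ)) + k % (N:ℤ) from (Int.mul_ediv_add_emod k (N:ℤ)).symm]
    rw [zpow_add, zpow_mul, h1, one_zpow, one_mul, ← zpow_natCast,
      Int.toNat_of_nonneg (Int.emod_nonneg k hNz.ne')]
  -- χ kills only the identity
  have hχ1 : ∀ x : Fˣ, χ x = 1 → x = 1 := by
    intro x hx
    obtain ⟨m, rfl⟩ := hpow x
    rw [map_pow, hχ] at hx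
    obtain ⟨t, rfl⟩ := (hζ.pow_eq_one_iff_dvd m).mp hx
    rw [pow_mul, hxN, one_pow]
  have hχN : ∀ x : Fˣ, (χ x) ^ N = 1 := fun x => by rw [← map_pow, hxN, map_one]
  -- `a_μ` is the geometric sum over the index interval
  have hIcc : Finset.Icc (2 ^ (n-1) - 1) (2 ^ n - 2) = Finset.Ico (2 ^ (n-1) - 1) N := by
    rw [← Finset.Ico_add_one_right_eq_Icc]
    congr 1
    omega
  have hA : ∀ μ ∈ Finset.Icc 1 (2 ^ n - 2),
      cfA n μ = ∑ i ∈ Finset.Icc (2 ^ (n-1) - 1) (2 ^ n - 2), (ξ ^ μ) ^ i := by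
    intro μ hμ
    rw [Finset.mem_Icc] at hμ
    have hw1 : ξ ^ μ ≠ 1 := hξ.pow_ne_one_of_pos_of_lt (by omega) (by omega)
    have hwN : (ξ ^ μ) ^ N = 1 := by
      rw [← pow_mul, mul_comm, pow_mul, hξN, one_pow]
    rw [hIcc, geom_sum_Ico hw1 (by omega), hwN]
    unfold cfA
    rw [← hzdef]
    have hcast : ((μ:ℤ) * ((2:ℤ) ^ (n-1) - 1)) = ((μ * (2 ^ (n-1) - 1) : ℕ) : ℤ) := by
      have : ((2 ^ (n-1) - 1 : ℕ) : ℤ) = (2:ℤ) ^ (n-1) - 1 := by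
        rw [Nat.cast_sub Nat.one_le_two_pow]; push_cast; ring
      push_cast [this]
      ring
    rw [show (-((μ:ℤ) * ((2:ℤ) ^ (n-1) - 1))) = -((μ * (2 ^ (n-1) - 1) : ℕ) : ℤ) by rw [hcast],
      hζξ, show ((μ:ℤ)) = ((μ:ℕ):ℤ) from rfl, hζξ, pow_mul]
    have hd1 : (1 : ℂ) - ξ ^ μ ≠ 0 := fun h => hw1 (by linear_combination -h)
    have hd2 : (ξ ^ μ) - 1 ≠ 0 := fun h => hw1 (by linear_combination h)
    field_simp
    ring
  -- orthogonality
  have horth : ∀ c : ℂ, c ^ N = 1 →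
      ∑ μ ∈ Finset.Icc 1 (2 ^ n - 2), c ^ μ = (if c = 1 then (N:ℂ) else 0) - 1 := by
    intro c hc
    have hI2 : Finset.Icc 1 (2 ^ n - 2) = Finset.Ico 1 N := by
      rw [← Finset.Ico_add_one_right_eq_Icc]
      congr 1
      omega
    have hrange : ∑ μ ∈ Finset.range N, c ^ μ = if c = 1 then (N:ℂ) else 0 := by
      split_ifs with h
      · subst h; simp
      · rw [geom_sum_eq h, hc, sub_self, zero_div]
    have hsplit : ∑ μ ∈ Finset.range N, c ^ μ = c ^ 0 + ∑ μ ∈ Finset.Ico 1 N, c ^ μ := by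
      rw [Finset.range_eq_Ico, Finset.sum_eq_sum_Ico_succ_bot (by omega)]
    rw [hsplit, pow_zero] at hrange
    rw [hI2]
    linear_combination hrange
  -- the critical characterization of when c = 1
  have hcrit : ∀ (x : Fˣ) (i : ℕ), (χ x * ξ ^ (ℓ + i) = 1) ↔ x = α ^ (ℓ + i) := by
    intro x i
    have h1 : χ (α ^ (ℓ + i)) * χ ((α ^ (ℓ + i))⁻¹) = 1 := by
      rw [← map_mul, mul_inv_cancel, map_one]
    have hinv : χ ((α ^ (ℓ + i))⁻¹) = ξ ^ (ℓ + i) := by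
      have h2 : χ (α ^ (ℓ + i)) = ζ ^ (ℓ + i) := by rw [map_pow, hχ]
      rw [h2] at h1
      have := eq_inv_of_mul_eq_one_right h1
      rw [this, hxidef, inv_pow]
    constructor
    · intro h
      have : χ (x * (α ^ (ℓ + i))⁻¹) = 1 := by rw [map_mul, hinv, h]
      have := hχ1 _ this
      rwa [mul_inv_eq_one] at this
    · rintro rfl
      rw [← hinv, ← map_mul, mul_inv_cancel, map_one]
  -- the main computation
  have hT : (∑ μ ∈ Finset.Icc 1 (2 ^ n - 2),
        cfGauss χ 1 μ * ζ ^ (-((μ : ℤ) * (ℓ : ℤ))) * cfA n μ)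
      = (N:ℂ) * cfS n α (α ^ ℓ) + ((2:ℂ) ^ (n-1)) := by
    have step1 : ∀ μ ∈ Finset.Icc 1 (2 ^ n - 2),
        cfGauss χ 1 μ * ζ ^ (-((μ : ℤ) * (ℓ : ℤ))) * cfA n μ
        = ∑ x : Fˣ, ∑ i ∈ Finset.Icc (2 ^ (n-1) - 1) (2 ^ n - 2),
            cfSgn F (x : F) * (χ x * ξ ^ (ℓ + i)) ^ μ := by
      intro μ hμ
      rw [hA μ hμ]
      unfold cfGauss
      rw [show (-((μ : ℤ) * (ℓ : ℤ))) = -(((μ * ℓ : ℕ)):ℤ) by push_cast; ring, hζξ]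
      rw [Finset.sum_mul, Finset.sum_mul]
      refine Finset.sum_congr rfl fun x _ => ?_
      rw [Finset.mul_sum]
      refine Finset.sum_congr rfl fun i _ => ?_
      have hexp : ξ ^ (μ * ℓ) * (ξ ^ μ) ^ i = (ξ ^ (ℓ + i)) ^ μ := by
        rw [← pow_mul, ← pow_mul, ← pow_add]
        congr 1
        ring
      rw [Units.val_one, one_mul, mul_pow, ← hexp]
      ring
    rw [Finset.sum_congr rfl step1]
    rw [Finset.sum_comm]
    have step2 : ∀ x : Fˣ,
        (∑ μ ∈ Finset.Icc 1 (2 ^ n - 2), ∑ i ∈ Finset.Icc (2 ^ (n-1) - 1) (2 ^ n - 2),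
          cfSgn F (x : F) * (χ x * ξ ^ (ℓ + i)) ^ μ)
        = ∑ i ∈ Finset.Icc (2 ^ (n-1) - 1) (2 ^ n - 2),
            cfSgn F (x : F) * ((if x = α ^ (ℓ + i) then (N:ℂ) else 0) - 1) := by
      intro x
      rw [Finset.sum_comm]
      refine Finset.sum_congr rfl fun i _ => ?_
      have hcN : (χ x * ξ ^ (ℓ + i)) ^ N = 1 := by
        rw [mul_pow, hχN, ← pow_mul, mul_comm (ℓ + i) N, pow_mul, hξN, one_pow, one_mul]
      rw [← Finset.mul_sum, horth _ hcN]
      congr 2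
      simp only [hcrit x i]
    rw [Finset.sum_congr rfl (fun x _ => step2 x)]
    rw [Finset.sum_comm]
    have step3 : ∀ i ∈ Finset.Icc (2 ^ (n-1) - 1) (2 ^ n - 2),
        (∑ x : Fˣ, cfSgn F (x : F) * ((if x = α ^ (ℓ + i) then (N:ℂ) else 0) - 1))
        = (N:ℂ) * cfSgn F ((α:F) ^ ℓ * (α:F) ^ i) + 1 := by
      intro i _
      have hsum1 : ∑ x : Fˣ, cfSgn F (x : F) * (if x = α ^ (ℓ + i) then (N:ℂ) else 0)
          = cfSgn F ((α ^ (ℓ + i) : Fˣ) : F) * (N:ℂ) := by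
        simp only [mul_ite, mul_zero]
        rw [Finset.sum_ite_eq' Finset.univ (α ^ (ℓ + i)) (fun x => cfSgn F (x : F) * (N:ℂ))]
        simp
      have hval : ((α ^ (ℓ + i) : Fˣ) : F) = (α:F) ^ ℓ * (α:F) ^ i := by
        push_cast
        rw [pow_add]
      calc (∑ x : Fˣ, cfSgn F (x : F) * ((if x = α ^ (ℓ + i) then (N:ℂ) else 0) - 1))
          = (∑ x : Fˣ, cfSgn F (x : F) * (if x = α ^ (ℓ + i) then (N:ℂ) else 0))
            - ∑ x : Fˣ, cfSgn F (x : F) := by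
            rw [← Finset.sum_sub_distrib]
            exact Finset.sum_congr rfl fun x _ => by ring
        _ = (N:ℂ) * cfSgn F ((α:F) ^ ℓ * (α:F) ^ i) + 1 := by
            rw [hsum1, cf_sum_sgn_units F, hval]
            ring
    rw [Finset.sum_congr rfl step3, Finset.sum_add_distrib, Finset.sum_const, ← Finset.mul_sum]
    have hcardI : (Finset.Icc (2 ^ (n-1) - 1) (2 ^ n - 2)).card = 2 ^ (n-1) := by
      rw [Nat.card_Icc]
      omega
    rw [hcardI]
    unfold cfS
    have : ∀ i ∈ Finset.Icc (2 ^ (n-1) - 1) (2 ^ n - 2),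
        cfSgn F (((α ^ ℓ : Fˣ) : F) * (α:F) ^ i) = cfSgn F ((α:F) ^ ℓ * (α:F) ^ i) := by
      intro i _
      congr 1
      try push_cast
      try ring
    rw [Finset.sum_congr rfl this]
    push_cast
    try ring
  rw [hT]
  have hcN : ((N:ℕ):ℂ) = (2:ℂ) ^ n - 1 := by
    rw [hNdef, Nat.cast_sub Nat.one_le_two_pow]
    push_cast
    ring
  have hcN0 : ((2:ℂ) ^ n - 1) ≠ 0 := by
    rw [← hcN]
    exact_mod_cast hN0
  have h2c : (2:ℂ) ^ n = 2 * 2 ^ (n-1) := by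
    rw [← pow_succ']
    congr 1
    omega
  have h25 : (2:ℂ) ^ n / 2 = 2 ^ (n-1) := by rw [h2c]; ring
  have hNne : ((N:ℕ):ℂ) ≠ 0 := by exact_mod_cast hN0
  rw [← hcN, h25]
  field_simp
  ring
end

section
/- For every integer n ≥ 2 and every λ ∈ F_q^*, |S_λ| ≤ (1/(q−1)) ( q^{1/2} ∑_{μ=1}^{q−2} |a_μ| + q/2 ). -/
open Finset

section Helpers

open Finset

lemma cf_sum_shift {M : Type*} [AddCommMonoid M] (m k : ℕ) (hk : k ≤ m) (G : ℕ → M)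
    (hG : ∀ j, G (j + m) = G j) :
    ∑ d ∈ Finset.range m, G (k + d) = ∑ j ∈ Finset.range m, G j := by
  have h1 : ∑ j ∈ Finset.Ico k (k + m), G j = ∑ d ∈ Finset.range m, G (k + d) := by
    rw [Finset.sum_Ico_eq_sum_range, Nat.add_sub_cancel_left]
  rw [← h1, ← Finset.sum_Ico_consecutive G hk (Nat.le_add_left m k)]
  have h2 : ∑ j ∈ Finset.Ico m (k + m), G j = ∑ j ∈ Finset.range k, G j := by
    rw [add_comm k m, Finset.sum_Ico_eq_sum_range, Nat.add_sub_cancel_left]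
    exact Finset.sum_congr rfl fun i _ => by rw [add_comm, hG]
  rw [h2, add_comm, Finset.range_eq_Ico, Finset.range_eq_Ico]
  exact Finset.sum_Ico_consecutive G (Nat.zero_le k) hk

variable (F : Type) [Field F] [Fintype F] [Algebra (ZMod 2) F]

lemma cfSgn_add (a b : F) : cfSgn F (a + b) = cfSgn F a * cfSgn F b := by
  simp only [cfSgn, cfTr, map_add, ZMod.val_add, ← neg_one_pow_eq_pow_mod_two, pow_add]

lemma cfSgn_zero : cfSgn F 0 = 1 := by
  simp [cfSgn, cfTr]

lemma cfSgn_conj (x : F) : (starRingEnd ℂ) (cfSgn F x) = cfSgn F x := by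
  simp [cfSgn]

lemma cfSgn_abs (x : F) : ‖cfSgn F x‖ = 1 := by
  simp [cfSgn]

end Helpers

open Finset in
set_option maxHeartbeats 2000000 in
/-- For every `n ≥ 2` and every `λ ∈ F_q^*`,
`|S_λ| ≤ (1/(q-1)) ( q^{1/2} ∑_{μ=1}^{q-2} |a_μ| + q/2 )`. -/
theorem stmt_4 (n : ℕ) (hn : 2 ≤ n)
    (F : Type) [Field F] [Fintype F] [DecidableEq F] [Algebra (ZMod 2) F]
    (hF : Fintype.card F = 2 ^ n)
    (α : Fˣ) (hα : ∀ x : Fˣ, x ∈ Subgroup.zpowers α)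
    (lam : Fˣ) :
    ‖cfS n α lam‖ ≤
      (1 / ((2 : ℝ) ^ n - 1)) *
        (Real.sqrt (2 ^ n) * (∑ μ ∈ Finset.Icc 1 (2 ^ n - 2), ‖cfA n μ‖)
          + (2 : ℝ) ^ n / 2) := by
  classical
  set m : ℕ := 2 ^ n - 1 with hmdef
  have hq4 : 4 ≤ 2 ^ n := by
    calc (4:ℕ) = 2 ^ 2 := by norm_num
    _ ≤ 2 ^ n := Nat.pow_le_pow_right (by norm_num) hn
  have hP : 2 * 2 ^ (n - 1) = 2 ^ n := by
    rw [← pow_succ']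
    congr 1
    omega
  have hP2 : 2 ≤ 2 ^ (n - 1) := by omega
  have hm3 : 3 ≤ m := by omega
  have hm0 : 0 < m := by omega
  set ζ : ℂ := cfZeta n with hζdef
  have hcast : ((2:ℂ) ^ n - 1) = (m : ℂ) := by
    have : ((2:ℕ) ^ n : ℂ) = (2:ℂ) ^ n := by push_cast; ring
    rw [hmdef]
    push_cast [Nat.cast_sub (Nat.one_le_two_pow)]
    ring
  have hζ : IsPrimitiveRoot ζ m := by
    have h := Complex.isPrimitiveRoot_exp m hm0.ne'
    rw [hζdef, cfZeta, hcast]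
    exact h
  have hζm : ζ ^ m = 1 := hζ.pow_eq_one
  have hζ0 : ζ ≠ 0 := fun h => by
    rw [h, zero_pow hm0.ne'] at hζm
    exact zero_ne_one hζm
  have hζabs : ‖ζ‖ = 1 := by
    have h1 : ‖ζ‖ ^ m = 1 := by rw [← norm_pow, hζm, norm_one]
    have h2 := norm_nonneg ζ
    rcases (pow_eq_one_iff_cases.mp h1) with h | h | h
    · omega
    · exact h
    · nlinarith [h.1]
  have hζconj : (starRingEnd ℂ) ζ = ζ⁻¹ := by
    have h : ζ * (starRingEnd ℂ) ζ = 1 := by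
      rw [Complex.mul_conj]
      norm_cast
      rw [Complex.normSq_eq_norm_sq, hζabs]
      norm_num
    field_simp at h ⊢
    linear_combination h
  -- order of α
  have hord : orderOf α = m := by
    rw [orderOf_eq_card_of_forall_mem_zpowers hα, Nat.card_eq_fintype_card,
      Fintype.card_units, hF]
  have hαm : (α : F) ^ m = 1 := by
    have h := pow_orderOf_eq_one α
    rw [hord] at h
    rw [← Units.val_pow_eq_pow_val, h, Units.val_one]
  have hchar : (1 + 1 : F) = 0 := by
    have h2 : (1 + 1 : ZMod 2) = 0 := rfl
    calc (1 + 1 : F) = algebraMap (ZMod 2) F (1 + 1) := by rw [map_add, map_one]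
    _ = 0 := by rw [h2, map_zero]
  -- additive character sums
  have hsumF : ∑ x : F, cfSgn F ((lam : F) * x) = 0 := by
    have : FiniteDimensional (ZMod 2) F := Module.Finite.of_finite
    obtain ⟨c, hc⟩ := Algebra.trace_surjective (ZMod 2) F 1
    have hc' : cfTr F c = 1 := hc
    set c' : F := (lam : F)⁻¹ * c with hc'def
    have key : ∑ x : F, cfSgn F ((lam : F) * x)
        = ∑ x : F, cfSgn F ((lam : F) * (x + c')) := by
      exact (Fintype.sum_equiv (Equiv.addRight c')
        (fun x => cfSgn F ((lam : F) * (x + c')))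
        (fun x => cfSgn F ((lam : F) * x)) (fun x => rfl)).symm
    have hlc : (lam : F) * c' = c := by
      rw [hc'def, ← mul_assoc, mul_inv_cancel₀ (Units.ne_zero lam), one_mul]
    have hstep : ∀ x : F, cfSgn F ((lam : F) * (x + c'))
        = - cfSgn F ((lam : F) * x) := by
      intro x
      rw [mul_add, hlc, cfSgn_add]
      have : cfSgn F c = -1 := by
        rw [cfSgn, hc', show ZMod.val (1 : ZMod 2) = 1 from rfl, pow_one]
      rw [this]
      ring
    rw [Finset.sum_congr rfl (fun x _ => hstep x), Finset.sum_neg_distrib] at key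
    have h2 : (2 : ℂ) * ∑ x : F, cfSgn F ((lam : F) * x) = 0 := by
      linear_combination key
    have := mul_eq_zero.mp h2
    simpa using this
  have hsumU : ∑ u : Fˣ, cfSgn F ((lam : F) * (u : F)) = -1 := by
    have hsplit := Finset.sum_filter_add_sum_filter_not Finset.univ (fun x : F => x = 0)
      (fun x => cfSgn F ((lam : F) * x))
    have hzero : ∑ x ∈ Finset.univ.filter (fun x : F => x = 0), cfSgn F ((lam : F) * x)
        = 1 := by
      rw [Finset.filter_eq']
      simp [cfSgn_zero]
    have e1 : ∑ u : Fˣ, cfSgn F ((lam : F) * (u : F))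
        = ∑ s : {x : F // x ≠ 0}, cfSgn F ((lam : F) * (s : F)) := by
      exact Fintype.sum_equiv unitsEquivNeZero _ _ fun u => rfl
    have e2 : ∑ x ∈ Finset.univ.filter (fun x : F => ¬ x = 0), cfSgn F ((lam : F) * x)
        = ∑ s : {x : F // x ≠ 0}, cfSgn F ((lam : F) * (s : F)) :=
      Finset.sum_subtype _ (fun x => by simp) _
    rw [e1, ← e2]
    rw [hsumF, hzero] at hsplit
    linear_combination hsplit
  -- sums over powers of α give sums over units
  have hBij : ∀ h : Fˣ → ℂ, ∑ k ∈ range m, h (α ^ k) = ∑ u : Fˣ, h u := by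
    intro h
    have hinj : ∀ x ∈ range m, ∀ y ∈ range m, α ^ x = α ^ y → x = y := by
      intro x hx y hy hxy
      exact pow_injOn_Iio_orderOf (by simpa [hord] using Finset.mem_range.mp hx)
        (by simpa [hord] using Finset.mem_range.mp hy) hxy
    have himg : (range m).image (α ^ ·) = Finset.univ := by
      apply Finset.eq_univ_of_card
      rw [Finset.card_image_of_injOn hinj, Finset.card_range, Fintype.card_units, hF]
    rw [← himg, Finset.sum_image hinj]
  -- the exponential function f
  set f : ℕ → ℂ := fun j => cfSgn F ((lam : F) * (α : F) ^ j) with hfdef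
  have hfp : ∀ j, f (j + m) = f j := by
    intro j
    simp only [hfdef, pow_add, hαm, mul_one]
  have hfval : ∀ j, f j = (fun u : Fˣ => cfSgn F ((lam : F) * (u : F))) (α ^ j) := by
    intro j
    simp [hfdef]
  have hfconj : ∀ j, (starRingEnd ℂ) (f j) = f j := fun j => cfSgn_conj F _
  have hfabs : ∀ j, ‖f j‖ = 1 := fun j => cfSgn_abs F _
  -- the Gauss-type sums
  set T : ℕ → ℂ := fun μ => ∑ j ∈ range m, ((ζ ^ μ)⁻¹) ^ j * f j with hTdef
  have hT0 : T 0 = -1 := by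
    have : T 0 = ∑ j ∈ range m, f j := by
      simp [hTdef]
    rw [this, Finset.sum_congr rfl (fun j _ => hfval j)]
    exact (hBij _).trans hsumU
  -- orthogonality
  have horth : ∀ i < m, ∀ j < m,
      ∑ μ ∈ range m, (ζ ^ i * (ζ ^ j)⁻¹) ^ μ = if j = i then (m : ℂ) else 0 := by
    intro i hi j hj
    by_cases hij : j = i
    · subst hij
      rw [if_pos rfl, mul_inv_cancel₀ (pow_ne_zero _ hζ0)]
      simp
    · rw [if_neg hij]
      set x : ℂ := ζ ^ i * (ζ ^ j)⁻¹ with hxdef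
      have hx1 : x ≠ 1 := by
        intro hx
        apply hij
        refine (hζ.pow_inj hj hi ?_)
        have hj0 : (ζ : ℂ) ^ j ≠ 0 := pow_ne_zero _ hζ0
        field_simp [hxdef] at hx
        exact ((mul_inv_eq_one₀ hj0).mp hx).symm
      have hpowm : ∀ a : ℕ, (ζ ^ a) ^ m = 1 := by
        intro a
        rw [← pow_mul, mul_comm, pow_mul, hζm, one_pow]
      have hxm : x ^ m = 1 := by
        rw [hxdef, mul_pow, inv_pow, ← inv_pow, inv_pow, hpowm, hpowm]
        norm_num
      rw [geom_sum_eq hx1, hxm]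
      simp
  -- Fourier expansion of f on the interval
  have hkey : ∀ i ∈ Finset.Icc (2 ^ (n - 1) - 1) (2 ^ n - 2),
      f i = (1 / (m : ℂ)) * ∑ μ ∈ range m, (ζ ^ μ) ^ i * T μ := by
    intro i hi
    have him : i < m := by
      have := (Finset.mem_Icc.mp hi).2
      omega
    have e1 : ∀ μ, (ζ ^ μ) ^ i * T μ = ∑ j ∈ range m, (ζ ^ i * (ζ ^ j)⁻¹) ^ μ * f j := by
      intro μ
      rw [hTdef, Finset.mul_sum]
      refine Finset.sum_congr rfl fun j _ => ?_
      have h1 : (ζ ^ μ) ^ i = (ζ ^ i) ^ μ := by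
        rw [← pow_mul, ← pow_mul, mul_comm]
      have h2 : ((ζ ^ μ)⁻¹) ^ j = ((ζ ^ j)⁻¹) ^ μ := by
        rw [inv_pow, inv_pow, ← pow_mul, ← pow_mul, mul_comm]
      rw [← mul_assoc, h1, h2, ← mul_pow]
    rw [Finset.sum_congr rfl (fun μ _ => e1 μ), Finset.sum_comm]
    have e2 : ∀ j ∈ range m,
        ∑ μ ∈ range m, (ζ ^ i * (ζ ^ j)⁻¹) ^ μ * f j
          = (if j = i then (m : ℂ) else 0) * f j := by
      intro j hj
      rw [← Finset.sum_mul, horth i him j (Finset.mem_range.mp hj)]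
    rw [Finset.sum_congr rfl e2]
    simp only [ite_mul, zero_mul]
    rw [Finset.sum_ite_eq' (range m) i (fun j => (m : ℂ) * f j),
      if_pos (Finset.mem_range.mpr him)]
    have hmne : (m : ℂ) ≠ 0 := Nat.cast_ne_zero.mpr hm0.ne'
    field_simp
  -- the coefficients c μ
  set c : ℕ → ℂ := fun μ => ∑ i ∈ Finset.Icc (2 ^ (n - 1) - 1) (2 ^ n - 2), (ζ ^ μ) ^ i
    with hcdef
  -- main expansion
  have hS : cfS n α lam = (1 / (m : ℂ)) * ∑ μ ∈ range m, c μ * T μ := by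
    have h0 : cfS n α lam = ∑ i ∈ Finset.Icc (2 ^ (n - 1) - 1) (2 ^ n - 2), f i := rfl
    rw [h0, Finset.sum_congr rfl hkey, ← Finset.mul_sum, Finset.sum_comm]
    congr 1
    refine Finset.sum_congr rfl fun μ _ => ?_
    rw [hcdef, Finset.sum_mul]
  -- Gauss sum magnitude
  have hGauss : ∀ μ, 1 ≤ μ → μ ≤ m - 1 → T μ * (starRingEnd ℂ) (T μ) = ((2 : ℂ) ^ n) := by
    intro μ hμ1 hμ2
    set x : ℂ := ζ ^ μ with hxdef
    have hx0 : x ≠ 0 := pow_ne_zero _ hζ0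
    have hx1 : x ≠ 1 := hζ.pow_ne_one_of_pos_of_lt (by omega) (by omega)
    have hxm : x ^ m = 1 := by rw [hxdef, ← pow_mul, mul_comm, pow_mul, hζm, one_pow]
    have hxim : (x⁻¹) ^ m = 1 := by rw [inv_pow, hxm, inv_one]
    -- conjugate of T μ
    have hconjT : (starRingEnd ℂ) (T μ) = ∑ j ∈ range m, x ^ j * f j := by
      rw [hTdef]
      rw [map_sum]
      refine Finset.sum_congr rfl fun j _ => ?_
      rw [map_mul, hfconj, map_pow, map_inv₀, map_pow, hζconj]
      simp [hxdef, inv_pow]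
    rw [hconjT, mul_comm, Finset.sum_mul]
    -- shift the inner sum
    have hG : ∀ j, (x⁻¹) ^ (j + m) * f (j + m) = (x⁻¹) ^ j * f j := by
      intro j
      rw [hfp, pow_add, hxim, mul_one]
    have hshift : ∀ k ∈ range m, T μ = ∑ d ∈ range m, (x⁻¹) ^ (k + d) * f (k + d) := by
      intro k hk
      exact (cf_sum_shift m k (Finset.mem_range.mp hk).le _ hG).symm
    calc ∑ k ∈ range m, x ^ k * f k * T μ
        = ∑ k ∈ range m, ∑ d ∈ range m, x ^ k * f k * ((x⁻¹) ^ (k + d) * f (k + d)) := by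
          refine Finset.sum_congr rfl fun k hk => ?_
          rw [hshift k hk, Finset.mul_sum]
      _ = ∑ k ∈ range m, ∑ d ∈ range m, (x⁻¹) ^ d * (f k * f (k + d)) := by
          refine Finset.sum_congr rfl fun k _ => Finset.sum_congr rfl fun d _ => ?_
          have hxx : x ^ k * (x⁻¹) ^ (k + d) = (x⁻¹) ^ d := by
            rw [pow_add, ← mul_assoc, ← mul_pow, mul_inv_cancel₀ hx0, one_pow, one_mul]
          calc x ^ k * f k * ((x⁻¹) ^ (k + d) * f (k + d))
              = (x ^ k * (x⁻¹) ^ (k + d)) * (f k * f (k + d)) := by ring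
            _ = (x⁻¹) ^ d * (f k * f (k + d)) := by rw [hxx]
      _ = ∑ d ∈ range m, (x⁻¹) ^ d * ∑ k ∈ range m, f k * f (k + d) := by
          rw [Finset.sum_comm]
          exact Finset.sum_congr rfl fun d _ => (Finset.mul_sum _ _ _).symm
      _ = ∑ d ∈ range m, (x⁻¹) ^ d * (if d = 0 then (m : ℂ) else -1) := by
          refine Finset.sum_congr rfl fun d hd => ?_
          congr 1
          -- inner correlation sum
          have hff : ∀ k, f k * f (k + d)
              = cfSgn F ((lam : F) * ((α : F) ^ k * (1 + (α : F) ^ d))) := by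
            intro k
            rw [hfdef]
            simp only
            rw [← cfSgn_add]
            congr 1
            rw [pow_add]
            ring
          by_cases hd0 : d = 0
          · subst hd0
            rw [if_pos rfl]
            have : ∀ k, f k * f (k + 0) = 1 := by
              intro k
              rw [hff, pow_zero, hchar, mul_zero, mul_zero, cfSgn_zero]
            rw [Finset.sum_congr rfl fun k _ => this k]
            simp
          · rw [if_neg hd0]
            have hdm : d < m := Finset.mem_range.mp hd
            have hαd1 : (α : F) ^ d ≠ 1 := by
              intro h
              have hu : α ^ d = 1 := Units.ext (by simpa using h)
              have := orderOf_dvd_of_pow_eq_one hu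
              rw [hord] at this
              have := Nat.le_of_dvd (by omega) this
              omega
            have hc0 : (1 + (α : F) ^ d) ≠ 0 := by
              intro h
              apply hαd1
              have h1 : (α : F) ^ d = -1 := by linear_combination h
              have h2 : (-1 : F) = 1 := by linear_combination -hchar
              rw [h1, h2]
            set u : Fˣ := Units.mk0 (1 + (α : F) ^ d) hc0 with hudef
            have huval : (u : F) = 1 + (α : F) ^ d := rfl
            calc ∑ k ∈ range m, f k * f (k + d)
                = ∑ k ∈ range m, (fun v : Fˣ =>
                    cfSgn F ((lam : F) * ((v : F) * (u : F)))) (α ^ k) := by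
                  refine Finset.sum_congr rfl fun k _ => ?_
                  rw [hff k]
                  simp [huval]
              _ = ∑ v : Fˣ, cfSgn F ((lam : F) * ((v : F) * (u : F))) :=
                  hBij (fun v : Fˣ => cfSgn F ((lam : F) * ((v : F) * (u : F))))
              _ = ∑ w : Fˣ, cfSgn F ((lam : F) * (w : F)) :=
                  Fintype.sum_equiv (Equiv.mulRight u)
                    (fun v => cfSgn F ((lam : F) * ((v : F) * (u : F))))
                    (fun w => cfSgn F ((lam : F) * (w : F))) (fun v => rfl)
              _ = -1 := hsumU
      _ = ((2 : ℂ) ^ n) := by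
          rw [← Finset.add_sum_erase _ _ (Finset.mem_range.mpr hm0)]
          rw [if_pos rfl, pow_zero, one_mul]
          have herase : ∑ d ∈ (range m).erase 0, (x⁻¹) ^ d * (if d = 0 then (m : ℂ) else -1)
              = ∑ d ∈ (range m).erase 0, -((x⁻¹) ^ d) := by
            refine Finset.sum_congr rfl fun d hd => ?_
            rw [if_neg (Finset.mem_erase.mp hd).1]
            ring
          rw [herase, Finset.sum_neg_distrib]
          have hg0 : ∑ d ∈ range m, (x⁻¹) ^ d = 0 := by
            have hxi1 : x⁻¹ ≠ 1 := fun h => hx1 (by rw [← inv_inv x, h, inv_one])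
            rw [geom_sum_eq hxi1, hxim]
            simp
          have : ∑ d ∈ (range m).erase 0, (x⁻¹) ^ d = -1 := by
            have := Finset.add_sum_erase (range m) (fun d => (x⁻¹) ^ d)
              (Finset.mem_range.mpr hm0)
            rw [hg0] at this
            simp only [pow_zero] at this
            linear_combination this
          rw [this]
          have : ((m : ℂ)) + 1 = (2 : ℂ) ^ n := by
            rw [← hcast]
            ring
          linear_combination this
  -- magnitude of T μ
  have hTabs : ∀ μ ∈ Finset.Icc 1 (m - 1), ‖T μ‖ = Real.sqrt ((2:ℝ) ^ n) := by
    intro μ hμ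
    obtain ⟨h1, h2⟩ := Finset.mem_Icc.mp hμ
    have h := hGauss μ h1 h2
    rw [Complex.mul_conj] at h
    have hns : Complex.normSq (T μ) = (2:ℝ) ^ n := by
      have h' : ((Complex.normSq (T μ) : ℝ) : ℂ) = (((2:ℝ) ^ n : ℝ) : ℂ) := by
        rw [h]; push_cast; ring
      exact_mod_cast h'
    rw [Complex.norm_def, hns]
  -- value of c 0
  have hc0 : c 0 = ((2 ^ (n - 1) : ℕ) : ℂ) := by
    rw [hcdef]
    simp only [pow_zero, one_pow, Finset.sum_const, nsmul_eq_mul, mul_one, Nat.card_Icc]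
    congr 1
    omega
  -- |c μ| = |a μ|
  have habsA : ∀ μ ∈ Finset.Icc 1 (m - 1),
      ‖c μ‖ = ‖cfA n μ‖ := by
    intro μ hμ
    obtain ⟨h1, h2⟩ := Finset.mem_Icc.mp hμ
    set x : ℂ := ζ ^ μ with hxdef
    have hx0 : x ≠ 0 := pow_ne_zero _ hζ0
    have hx1 : x ≠ 1 := hζ.pow_ne_one_of_pos_of_lt (by omega) (by omega)
    have hxm : x ^ m = 1 := by rw [hxdef, ← pow_mul, mul_comm, pow_mul, hζm, one_pow]
    set p : ℕ := 2 ^ (n - 1) - 1 with hpdef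
    have hpm : p < m := by omega
    have hIco : Finset.Icc (2 ^ (n - 1) - 1) (2 ^ n - 2) = Finset.Ico p m := by
      have hm' : m = (2 ^ n - 2) + 1 := by omega
      rw [hm', Finset.Ico_add_one_right_eq_Icc]
    have hsplit : ∑ i ∈ range p, x ^ i + ∑ i ∈ Finset.Ico p m, x ^ i
        = ∑ i ∈ range m, x ^ i := by
      rw [Finset.range_eq_Ico, Finset.range_eq_Ico]
      exact Finset.sum_Ico_consecutive _ (Nat.zero_le p) hpm.le
    have hgeom0 : ∑ i ∈ range m, x ^ i = 0 := by
      rw [geom_sum_eq hx1, hxm]; simp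
    have hcval : c μ = -((x ^ p - 1) / (x - 1)) := by
      have hmid : ∑ i ∈ Finset.Ico p m, x ^ i = -∑ i ∈ range p, x ^ i := by
        linear_combination hsplit + hgeom0
      rw [hcdef]
      simp only
      rw [hIco, hmid, geom_sum_eq hx1]
    have hz1 : cfZeta n ^ (-((μ : ℤ) * ((2 : ℤ) ^ (n - 1) - 1))) = (x ^ p)⁻¹ := by
      have he : (μ : ℤ) * ((2 : ℤ) ^ (n - 1) - 1) = ((μ * p : ℕ) : ℤ) := by
        rw [hpdef]
        push_cast [Nat.cast_sub (Nat.one_le_two_pow)]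
        ring
      rw [he, zpow_neg, zpow_natCast, pow_mul, ← hζdef, ← hxdef]
    have hz2 : cfZeta n ^ (-(μ : ℤ)) = x⁻¹ := by
      rw [zpow_neg, zpow_natCast, ← hζdef, ← hxdef]
    have hx1' : x - 1 ≠ 0 := sub_ne_zero.mpr hx1
    have hxinv1 : 1 - x⁻¹ ≠ 0 := by
      rw [sub_ne_zero]
      intro h
      exact hx1 (by rw [← inv_inv x, ← h, inv_one])
    have hA : cfA n μ = (x * (x ^ p)⁻¹) * c μ := by
      rw [cfA, hz1, hz2, hcval]
      field_simp
      ring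
    have hxabs : ‖x‖ = 1 := by
      rw [hxdef, norm_pow, hζabs, one_pow]
    rw [hA]
    simp [norm_mul, norm_inv, norm_pow, hxabs]
  -- triangle inequality
  have habs1 : ‖cfS n α lam‖
      ≤ (1 / (m : ℝ)) * ∑ μ ∈ range m, ‖c μ‖ * ‖T μ‖ := by
    have hcoef : ‖1 / (m : ℂ)‖ = 1 / (m : ℝ) := by
      rw [norm_div, norm_one, Complex.norm_natCast]
    rw [hS, norm_mul, hcoef]
    have h1 : ‖∑ μ ∈ range m, c μ * T μ‖
        ≤ ∑ μ ∈ range m, ‖c μ‖ * ‖T μ‖ := by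
      refine le_trans (norm_sum_le _ _) ?_
      exact le_of_eq (Finset.sum_congr rfl fun μ _ => norm_mul _ _)
    exact mul_le_mul_of_nonneg_left h1 (by positivity)
  have hrange : range m = insert 0 (Finset.Icc 1 (m - 1)) := by
    ext j
    simp only [Finset.mem_range, Finset.mem_insert, Finset.mem_Icc]
    omega
  have hsum2 : ∑ μ ∈ range m, ‖c μ‖ * ‖T μ‖
      = ((2 ^ (n - 1) : ℕ) : ℝ)
        + (∑ μ ∈ Finset.Icc 1 (m - 1), ‖cfA n μ‖) * Real.sqrt ((2:ℝ) ^ n) := by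
    rw [hrange, Finset.sum_insert (by simp)]
    congr 1
    · rw [hc0, hT0, Complex.norm_natCast]
      simp
    · calc ∑ μ ∈ Finset.Icc 1 (m - 1), ‖c μ‖ * ‖T μ‖
          = ∑ μ ∈ Finset.Icc 1 (m - 1), ‖cfA n μ‖ * Real.sqrt ((2:ℝ) ^ n) :=
            Finset.sum_congr rfl fun μ hμ => by rw [habsA μ hμ, hTabs μ hμ]
        _ = (∑ μ ∈ Finset.Icc 1 (m - 1), ‖cfA n μ‖) * Real.sqrt ((2:ℝ) ^ n) := by
            rw [Finset.sum_mul]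
  rw [hsum2] at habs1
  have hIccEq : Finset.Icc 1 (m - 1) = Finset.Icc 1 (2 ^ n - 2) := by
    have hm' : m - 1 = 2 ^ n - 2 := by omega
    rw [hm']
  rw [hIccEq] at habs1
  refine le_trans habs1 (le_of_eq ?_)
  have hmR : ((m : ℕ) : ℝ) = (2:ℝ) ^ n - 1 := by
    rw [hmdef]
    push_cast [Nat.cast_sub (Nat.one_le_two_pow)]
    ring
  have hPR : ((2 ^ (n - 1) : ℕ) : ℝ) = (2:ℝ) ^ n / 2 := by
    have h2n' : (2:ℝ) ^ n = 2 * (2:ℝ) ^ (n - 1) := by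
      rw [← pow_succ']
      congr 1
      omega
    push_cast
    linarith
  rw [hmR, hPR]
  have hsqrt : Real.sqrt ((2:ℝ) ^ n) = Real.sqrt (2 ^ n) := rfl
  rw [hsqrt]
  ring
end

section
/- For every integer n ≥ 2 and every even integer μ with 2 ≤ μ ≤ q−2, setting z = exp(−iπμ/(q−1)) ∈ ℂ, one has z + z² ≠ 0 and a_μ = 1/(z + z²); in particular a_μ lies on the image of the unit circle under the map z ↦ 1/(z + z²). -/
/-- For `n ≥ 2` and even `μ` with `2 ≤ μ ≤ q−2`, setting `z = exp(−iπμ/(q−1))`,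
one has `z + z² ≠ 0` and `a_μ = 1/(z + z²)`; moreover `|z| = 1`, so `a_μ` lies on
the image of the unit circle under `z ↦ 1/(z + z²)`. -/
theorem stmt_11 (n : ℕ) (hn : 2 ≤ n) (μ : ℕ) (hμ2 : 2 ≤ μ) (hμq : μ ≤ 2 ^ n - 2)
    (hμeven : Even μ)
    (z : ℂ) (hz : z = Complex.exp (-(Real.pi * Complex.I * μ / ((2 : ℂ) ^ n - 1)))) :
    z + z ^ 2 ≠ 0 ∧ cfA n μ = 1 / (z + z ^ 2) ∧ ‖z‖ = 1 := by
  obtain ⟨m, hm⟩ := hμeven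
  have h4 : 4 ≤ 2 ^ n := by
    calc (4 : ℕ) = 2 ^ 2 := by norm_num
    _ ≤ 2 ^ n := Nat.pow_le_pow_right (by norm_num) hn
  set r : ℝ := (2 : ℝ) ^ n - 1 with hrdef
  have hr4 : (4 : ℝ) ≤ (2 : ℝ) ^ n := by
    have := h4
    exact_mod_cast (by exact_mod_cast this : (4 : ℝ) ≤ ((2 ^ n : ℕ) : ℝ))
  have hr0 : (0 : ℝ) < r := by rw [hrdef]; linarith
  have hμr : (μ : ℝ) < r := by
    have h1 : μ < 2 ^ n - 1 := by omega
    have h2 : (μ : ℝ) < ((2 ^ n - 1 : ℕ) : ℝ) := by exact_mod_cast h1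
    have h3 : ((2 ^ n - 1 : ℕ) : ℝ) = r := by
      rw [hrdef]; push_cast [Nat.cast_sub (by omega : 1 ≤ 2 ^ n)]; ring
    linarith [h3 ▸ h2]
  have hQr : ((2 : ℂ) ^ n - 1) = (r : ℂ) := by rw [hrdef]; push_cast; ring
  have hQ0 : ((2 : ℂ) ^ n - 1) ≠ 0 := by
    rw [hQr]
    exact_mod_cast hr0.ne'
  set θ : ℝ := -(Real.pi * μ / r) with hθdef
  have hzθ : z = Complex.exp ((θ : ℂ) * Complex.I) := by
    rw [hz, hQr]; congr 1; rw [hθdef]; push_cast; ring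
  have habs : ‖z‖ = 1 := by
    rw [hzθ]; exact Complex.norm_exp_ofReal_mul_I θ
  have hπ := Real.pi_pos
  have hθlb : -Real.pi < θ := by
    rw [hθdef]
    have : Real.pi * μ / r < Real.pi := by
      rw [div_lt_iff₀ hr0]
      nlinarith
    linarith
  have hθub : θ < 0 := by
    rw [hθdef]
    have : 0 < Real.pi * μ / r := by positivity
    linarith
  have hz2 : z ^ 2 = Complex.exp (((2 * θ : ℝ) : ℂ) * Complex.I) := by
    rw [hzθ, ← Complex.exp_nat_mul]; congr 1; push_cast; ring
  have hz2ne1 : z ^ 2 ≠ 1 := by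
    intro hcon
    rw [hz2, Complex.exp_eq_one_iff] at hcon
    obtain ⟨k, hk⟩ := hcon
    have h2 : (2 * θ : ℝ) = (k : ℝ) * (2 * Real.pi) := by
      rw [show ((k : ℂ) * (2 * ↑Real.pi * Complex.I)) =
          (((k : ℝ) * (2 * Real.pi) : ℝ) : ℂ) * Complex.I by push_cast; ring] at hk
      exact_mod_cast mul_right_cancel₀ Complex.I_ne_zero hk
    rcases le_or_gt 0 k with h | h
    · have : (0 : ℝ) ≤ (k : ℝ) * (2 * Real.pi) := by
        have : (0 : ℝ) ≤ (k : ℝ) := by exact_mod_cast h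
        positivity
      linarith
    · have hk' : k ≤ -1 := by omega
      have hk1 : (k : ℝ) ≤ -1 := by exact_mod_cast hk'
      nlinarith
  have hz0 : z ≠ 0 := by rw [hzθ]; exact Complex.exp_ne_zero _
  have h1z : (1 : ℂ) + z ≠ 0 := by
    intro h
    apply hz2ne1
    have hz1 : z = -1 := by linear_combination h
    rw [hz1]; ring
  have hsum : z + z ^ 2 ≠ 0 := by
    have h : z + z ^ 2 = z * (1 + z) := by ring
    rw [h]; exact mul_ne_zero hz0 h1z
  have h1mz2 : (1 : ℂ) - z ^ 2 ≠ 0 := sub_ne_zero.mpr (Ne.symm hz2ne1)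
  have hpow : ∀ k : ℤ, cfZeta n ^ k =
      Complex.exp ((k : ℂ) * (2 * Real.pi * Complex.I / ((2 : ℂ) ^ n - 1))) :=
    fun k => (Complex.exp_int_mul _ k).symm
  have h2n : (2 : ℂ) ^ n = 2 * (2 : ℂ) ^ (n - 1) := by
    have h : n - 1 + 1 = n := by omega
    calc (2 : ℂ) ^ n = (2 : ℂ) ^ (n - 1 + 1) := by rw [h]
    _ = 2 * (2 : ℂ) ^ (n - 1) := by rw [pow_succ]; ring
  have hζμ : cfZeta n ^ (-(μ : ℤ)) = z ^ 2 := by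
    rw [hpow, hz2, hQr]
    congr 1
    rw [hθdef]
    push_cast
    ring
  have hζbig : cfZeta n ^ (-((μ : ℤ) * ((2 : ℤ) ^ (n - 1) - 1))) = z⁻¹ := by
    rw [hpow]
    have key : ((-((μ : ℤ) * ((2 : ℤ) ^ (n - 1) - 1)) : ℤ) : ℂ) *
        (2 * Real.pi * Complex.I / ((2 : ℂ) ^ n - 1))
        = ((-m : ℤ) : ℂ) * (2 * Real.pi * Complex.I) +
          (m : ℂ) * (2 * Real.pi * Complex.I) / ((2 : ℂ) ^ n - 1) := by
      have hT0 : 2 * (2 : ℂ) ^ (n - 1) - 1 ≠ 0 := by rw [← h2n]; exact hQ0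
      push_cast [hm, h2n]
      field_simp
      have hX : (-1 + 2 ^ (n - 1) * 2 : ℂ) ≠ 0 := by
        rw [show (-1 + 2 ^ (n - 1) * 2 : ℂ) = 2 * 2 ^ (n - 1) - 1 by ring]; exact hT0
      linear_combination (-(m : ℂ)) * (mul_inv_cancel₀ hX)
    rw [key, Complex.exp_add, Complex.exp_int_mul_two_pi_mul_I, one_mul,
      hzθ, ← Complex.exp_neg, hQr]
    congr 1
    rw [hθdef, hm]
    push_cast
    ring
  have hA : cfA n μ = (z⁻¹ - 1) / (1 - z ^ 2) := by
    rw [cfA, hζbig, hζμ]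
  refine ⟨hsum, ?_, habs⟩
  rw [hA]
  field_simp
  ring
end

section
/- For every integer n ≥ 2 and every odd integer μ with 1 ≤ μ ≤ q−2, setting z = −exp(−iπμ/(q−1)) ∈ ℂ, one has z + z² ≠ 0 and a_μ = 1/(z + z²); in particular a_μ lies on the image of the unit circle under the map z ↦ 1/(z + z²). -/
/-- For `n ≥ 2` and odd `μ` with `1 ≤ μ ≤ q−2`, setting `z = −exp(−iπμ/(q−1))`,
one has `z + z² ≠ 0` and `a_μ = 1/(z + z²)`; moreover `|z| = 1`, so `a_μ` lies on
the image of the unit circle under `z ↦ 1/(z + z²)`. -/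
theorem stmt_12 (n : ℕ) (hn : 2 ≤ n) (μ : ℕ) (hμ1 : 1 ≤ μ) (hμq : μ ≤ 2 ^ n - 2)
    (hμodd : Odd μ)
    (z : ℂ) (hz : z = -Complex.exp (-(Real.pi * Complex.I * μ / ((2 : ℂ) ^ n - 1)))) :
    z + z ^ 2 ≠ 0 ∧ cfA n μ = 1 / (z + z ^ 2) ∧ ‖z‖ = 1 := by
  obtain ⟨m, rfl⟩ : ∃ m, n = m + 2 := ⟨n - 2, by omega⟩
  have h4 : 4 ≤ 2 ^ (m + 2) := by
    calc (4:ℕ) = 2 ^ 2 := rfl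
    _ ≤ 2 ^ (m + 2) := Nat.pow_le_pow_right (by norm_num) (by omega)
  set N : ℂ := (2 : ℂ) ^ (m + 2) - 1 with hN
  have hNnat : N = ((2 ^ (m + 2) - 1 : ℕ) : ℂ) := by
    push_cast [Nat.one_le_two_pow]; ring
  have hN0 : N ≠ 0 := by
    rw [hNnat]
    exact_mod_cast (by omega : ¬ (2 ^ (m + 2) - 1 : ℕ) = 0)
  set t : ℂ := Real.pi * Complex.I * μ / N with ht
  have hπ : (Real.pi : ℂ) ≠ 0 := Complex.ofReal_ne_zero.mpr Real.pi_ne_zero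
  have hNt : N * t = Real.pi * Complex.I * μ := by
    rw [ht]; field_simp
  -- |z| = 1
  have habs : ‖z‖ = 1 := by
    have htr : -t = ((-(Real.pi * μ / ((2:ℝ) ^ (m + 2) - 1)) : ℝ) : ℂ) * Complex.I := by
      rw [ht, hN]; push_cast; ring
    rw [hz, norm_neg, htr, Complex.norm_exp_ofReal_mul_I]
  -- z ≠ 0
  have hz0 : z ≠ 0 := by
    rw [hz]; simpa using Complex.exp_ne_zero _
  -- z ^ 2 = exp (-(2*t))
  have hz2 : z ^ 2 = Complex.exp (-(2 * t)) := by
    rw [hz, neg_pow, ← Complex.exp_nat_mul]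
    norm_num
  -- z ^ 2 ≠ 1
  have hz21 : z ^ 2 ≠ 1 := by
    rw [hz2]
    intro h
    rw [Complex.exp_eq_one_iff] at h
    obtain ⟨k, hk⟩ := h
    rw [ht] at hk
    field_simp at hk
    have h2πI : (2:ℂ) * Real.pi * Complex.I ≠ 0 :=
      mul_ne_zero (mul_ne_zero two_ne_zero hπ) Complex.I_ne_zero
    have h2 : (2 * (Real.pi:ℂ) * Complex.I) * (μ:ℂ)
        = (2 * (Real.pi:ℂ) * Complex.I) * ((-k) * N) := by linear_combination (-(2 * (Real.pi:ℂ) * Complex.I)) * hk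
    have h3 : (μ:ℂ) = (-k) * ((2 ^ (m + 2) - 1 : ℕ) : ℂ) := by
      rw [← hNnat]; exact mul_left_cancel₀ h2πI h2
    have h5 : (μ:ℤ) = (-k) * ((2 ^ (m + 2) - 1 : ℕ) : ℤ) := by exact_mod_cast h3
    have hK3 : (3:ℤ) ≤ ((2 ^ (m + 2) - 1 : ℕ) : ℤ) := by exact_mod_cast (by omega : 3 ≤ 2 ^ (m+2) - 1)
    have hμle : (μ:ℤ) ≤ ((2 ^ (m + 2) - 1 : ℕ) : ℤ) - 1 := by
      have h6 : μ + 1 ≤ 2 ^ (m+2) - 1 := by omega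
      have := (Int.ofNat_le.mpr h6)
      push_cast at this ⊢
      omega
    have hμ1' : (1:ℤ) ≤ (μ:ℤ) := by exact_mod_cast hμ1
    rcases le_or_gt (-k) 0 with hcase | hcase
    · nlinarith
    · have h1k : (1:ℤ) ≤ -k := hcase
      nlinarith
  -- exp(-(π I μ)) = -1
  have hm1 : Complex.exp (-(Real.pi * Complex.I * μ)) = -1 := by
    have : -((Real.pi : ℂ) * Complex.I * μ) = ((-μ : ℤ) : ℂ) * (Real.pi * Complex.I) := by
      push_cast; ring
    rw [this, Complex.exp_int_mul, Complex.exp_pi_mul_I]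
    rw [zpow_neg, zpow_natCast, hμodd.neg_one_pow]
    norm_num
  -- key: z⁻¹ = exp(-(2^(m+2)-2) t)
  have hkey : Complex.exp (-(((2:ℂ) ^ (m + 2) - 2) * t)) = z⁻¹ := by
    have he : -(((2:ℂ) ^ (m + 2) - 2) * t) = t + -(N * t) := by rw [hN]; ring
    rw [he, Complex.exp_add, hNt, hm1, hz]
    rw [inv_neg, ← Complex.exp_neg, neg_neg]; ring
  -- zeta powers
  have hζ1 : cfZeta (m + 2) ^ (-(μ : ℤ)) = z ^ 2 := by
    rw [cfZeta, ← Complex.exp_int_mul, hz2]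
    congr 1
    rw [ht]; push_cast; ring
  have hζ2 : cfZeta (m + 2) ^ (-((μ : ℤ) * ((2 : ℤ) ^ (m + 2 - 1) - 1))) = z⁻¹ := by
    rw [cfZeta, ← Complex.exp_int_mul, ← hkey]
    congr 1
    have : m + 2 - 1 = m + 1 := rfl
    rw [this, ht]; push_cast
    have h2 : (2:ℂ) ^ (m + 2) = 2 * 2 ^ (m + 1) := by ring
    rw [h2]; ring
  -- finish
  have h1z : 1 + z ≠ 0 := by
    intro h
    apply hz21
    have : z = -1 := by linear_combination h
    rw [this]; norm_num
  have hzz : z + z ^ 2 ≠ 0 := by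
    intro h
    rcases mul_eq_zero.mp (by linear_combination h : z * (1 + z) = 0) with h' | h'
    · exact hz0 h'
    · exact h1z h'
  refine ⟨hzz, ?_, habs⟩
  rw [cfA, hζ1, hζ2]
  rw [div_eq_div_iff (by intro h; apply hz21; linear_combination -h) hzz]
  field_simp
  ring
end

section
/- For every integer n ≥ 2 and every even integer μ with 2 ≤ μ ≤ q−2, one has a_μ = exp( 3πiμ / (2(q−1)) ) / ( 2 cos( πμ / (2(q−1)) ) ); in particular |a_μ| = 1 / ( 2 cos( πμ / (2(q−1)) ) ) and the argument of a_μ is 3πμ / (2(q−1)) modulo 2π. -/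
/-- For `n ≥ 2` and even `μ` with `2 ≤ μ ≤ q−2`,
`a_μ = exp(3πiμ/(2(q−1))) / (2 cos(πμ/(2(q−1))))`; in particular
`|a_μ| = 1/(2 cos(πμ/(2(q−1))))` and `arg a_μ ≡ 3πμ/(2(q−1)) (mod 2π)`. -/
theorem stmt_13 (n : ℕ) (hn : 2 ≤ n) (μ : ℕ) (hμ2 : 2 ≤ μ) (hμq : μ ≤ 2 ^ n - 2)
    (hμeven : Even μ) :
    cfA n μ =
        Complex.exp (3 * Real.pi * Complex.I * μ / (2 * ((2 : ℂ) ^ n - 1))) /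
          (2 * Real.cos (Real.pi * μ / (2 * ((2 : ℝ) ^ n - 1)))) ∧
      ‖cfA n μ‖ = 1 / (2 * Real.cos (Real.pi * μ / (2 * ((2 : ℝ) ^ n - 1)))) ∧
      ∃ k : ℤ, Complex.arg (cfA n μ) =
        3 * Real.pi * μ / (2 * ((2 : ℝ) ^ n - 1)) + 2 * Real.pi * k := by
  obtain ⟨m, hm⟩ := hμeven
  have h4 : (4:ℕ) ≤ 2 ^ n := by
    calc (4:ℕ) = 2 ^ 2 := rfl
    _ ≤ 2 ^ n := Nat.pow_le_pow_right (by norm_num) hn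
  have hμlt : (μ : ℝ) < (2:ℝ) ^ n - 1 := by
    have h1 : (μ : ℝ) ≤ ((2 ^ n - 2 : ℕ) : ℝ) := by exact_mod_cast hμq
    have h2 : ((2 ^ n - 2 : ℕ) : ℝ) = (2:ℝ) ^ n - 2 := by
      have : (2:ℕ) ≤ 2 ^ n := by omega
      push_cast [Nat.cast_sub this]; ring
    linarith
  have hN : (0:ℝ) < (2:ℝ) ^ n - 1 := by
    have : (4:ℝ) ≤ (2:ℝ) ^ n := by exact_mod_cast h4
    linarith
  set φ : ℝ := Real.pi * μ / (2 * ((2 : ℝ) ^ n - 1)) with hφ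
  have hφpos : 0 < φ := by
    apply div_pos (by positivity) (by positivity)
  have hφlt : φ < Real.pi / 2 := by
    rw [hφ, div_lt_div_iff₀ (by positivity) (by norm_num)]
    have := Real.pi_pos
    nlinarith
  have hcos : 0 < Real.cos φ := Real.cos_pos_of_mem_Ioo ⟨by linarith [Real.pi_pos], hφlt⟩
  set w : ℂ := Complex.exp (↑φ * Complex.I) with hwdef
  have hw : w ≠ 0 := Complex.exp_ne_zero _
  have hNc : ((2:ℂ) ^ n - 1) = (((2:ℝ) ^ n - 1 : ℝ) : ℂ) := by push_cast; ring
  have hNc0 : ((2:ℂ) ^ n - 1) ≠ 0 := by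
    rw [hNc]; exact_mod_cast hN.ne'
  -- the exponent identity for the numerator
  have hpow : (2:ℂ) ^ n = 2 * 2 ^ (n - 1) := by
    conv_lhs => rw [show n = (n-1) + 1 by omega]
    ring
  have hzpow : ∀ k : ℤ, cfZeta n ^ k =
      Complex.exp ((k : ℂ) * (2 * Real.pi * Complex.I / ((2 : ℂ) ^ n - 1))) := by
    intro k; rw [Complex.exp_int_mul]; rfl
  have hnum : cfZeta n ^ (-((μ : ℤ) * ((2 : ℤ) ^ (n - 1) - 1))) = w ^ 2 := by
    rw [hzpow]
    have he1 : ((-((μ : ℤ) * ((2 : ℤ) ^ (n - 1) - 1)) : ℤ) : ℂ) *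
        (2 * Real.pi * Complex.I / ((2 : ℂ) ^ n - 1)) =
        2 * (↑φ * Complex.I) + ((-(m:ℤ) : ℤ) : ℂ) * (2 * Real.pi * Complex.I) := by
      have hφC : (φ : ℂ) = ↑Real.pi * (μ : ℂ) / (2 * ((2 : ℂ) ^ n - 1)) := by
        rw [hφ]; push_cast; ring
      rw [hφC]
      field_simp
      push_cast [hm]
      rw [hpow]
      ring
    rw [he1, Complex.exp_add, Complex.exp_int_mul_two_pi_mul_I, mul_one, two_mul,
      Complex.exp_add, hwdef, sq]
  have hden : cfZeta n ^ (-(μ : ℤ)) = (w ^ 4)⁻¹ := by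
    rw [hzpow]
    have he2 : ((-(μ:ℤ) : ℤ) : ℂ) * (2 * Real.pi * Complex.I / ((2 : ℂ) ^ n - 1)) =
        -(4 * (↑φ * Complex.I)) := by
      have hφC : (φ : ℂ) = ↑Real.pi * (μ : ℂ) / (2 * ((2 : ℂ) ^ n - 1)) := by
        rw [hφ]; push_cast; ring
      rw [hφC]; field_simp; push_cast; ring
    rw [he2, Complex.exp_neg, hwdef, ← Complex.exp_nat_mul]
    norm_num
  have hw4 : w ^ 4 ≠ 1 := by
    intro h
    rw [hwdef, ← Complex.exp_nat_mul, Complex.exp_eq_one_iff] at h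
    obtain ⟨k, hk⟩ := h
    have hkr : (4:ℝ) * φ = (k:ℝ) * (2 * Real.pi) := by
      have := hk
      rw [show ((k:ℂ)) * (2 * ↑Real.pi * Complex.I) = ((k:ℝ) * (2*Real.pi) : ℝ) * Complex.I by
        push_cast; ring, show ((4:ℕ):ℂ) * (↑φ * Complex.I) = ((4*φ : ℝ):ℂ) * Complex.I by
        push_cast; ring] at this
      have := mul_right_cancel₀ Complex.I_ne_zero this
      exact_mod_cast this
    have hπ := Real.pi_pos
    have h1 : (0:ℝ) < (k:ℝ) * (2 * Real.pi) := by rw [← hkr]; positivity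
    have h2 : (k:ℝ) * (2 * Real.pi) < 2 * Real.pi := by rw [← hkr]; linarith
    have hk0 : (0:ℝ) < (k:ℝ) := by nlinarith
    have hk1 : (k:ℝ) < 1 := by nlinarith
    have : (0:ℤ) < k := by exact_mod_cast hk0
    have : (1:ℤ) ≤ k := this
    have : (1:ℝ) ≤ (k:ℝ) := by exact_mod_cast this
    linarith
  have hdne : 1 - (w ^ 4)⁻¹ ≠ 0 := by
    rw [sub_ne_zero]
    intro h
    exact hw4 (by rw [← inv_inv (w^4), ← h, inv_one])
  have hcosC : ((Real.cos φ : ℝ) : ℂ) ≠ 0 := by exact_mod_cast hcos.ne'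
  have hA : cfA n μ = (w ^ 2 - 1) / (1 - (w ^ 4)⁻¹) := by
    rw [cfA, hnum, hden]
  have hkey : cfA n μ = w ^ 3 / (2 * ((Real.cos φ : ℝ) : ℂ)) := by
    rw [hA, Complex.ofReal_cos]
    rw [show (2:ℂ) * Complex.cos ↑φ = Complex.exp (↑φ * Complex.I) +
        Complex.exp (-↑φ * Complex.I) from Complex.two_cos φ]
    have hexpneg : Complex.exp (-↑φ * Complex.I) = w⁻¹ := by
      rw [hwdef, ← Complex.exp_neg]; ring_nf
    rw [hexpneg, ← hwdef]
    rw [div_eq_div_iff hdne (by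
      intro h
      apply hw
      have : w * (w + w⁻¹) = 0 := by rw [h, mul_zero]
      rw [mul_add, mul_inv_cancel₀ hw] at this
      have h2 : w^2 = -1 := by linear_combination this
      have h4 : w^4 = 1 := by rw [show (4:ℕ) = 2*2 from rfl, pow_mul, h2]; ring
      exact absurd h4 hw4)]
    field_simp
    ring
  have hw3 : w ^ 3 = Complex.exp (((3 * φ : ℝ) : ℂ) * Complex.I) := by
    rw [hwdef, ← Complex.exp_nat_mul]; push_cast; ring_nf
  have hexparg : Complex.exp (3 * ↑Real.pi * Complex.I * ↑μ / (2 * ((2 : ℂ) ^ n - 1)))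
      = w ^ 3 := by
    rw [hw3]
    congr 1
    rw [hφ, hNc]
    push_cast
    field_simp
  refine ⟨by rw [hkey, hexparg], ?_, ?_⟩
  · rw [hkey, norm_div, norm_pow, hwdef, Complex.norm_exp_ofReal_mul_I, one_pow, norm_mul,
      Complex.norm_two, Complex.norm_real, Real.norm_eq_abs, abs_of_pos hcos]
  · have hargeq : Complex.arg (cfA n μ) = Complex.arg (w ^ 3) := by
      rw [hkey, div_eq_inv_mul, show ((2:ℂ) * ((Real.cos φ : ℝ):ℂ))⁻¹ =
        (((2 * Real.cos φ)⁻¹ : ℝ) : ℂ) by push_cast; ring]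
      exact Complex.arg_real_mul _ (by positivity)
    have habs : ‖w ^ 3‖ = 1 := by
      rw [norm_pow, hwdef, Complex.norm_exp_ofReal_mul_I, one_pow]
    have h := Complex.norm_mul_exp_arg_mul_I (w ^ 3)
    rw [habs, Complex.ofReal_one, one_mul, hw3] at h
    rw [Complex.exp_eq_exp_iff_exists_int] at h
    obtain ⟨k, hk⟩ := h
    refine ⟨k, ?_⟩
    rw [hargeq, hw3]
    have hkr : Complex.arg (Complex.exp (((3 * φ : ℝ) : ℂ) * Complex.I)) = 3 * φ + (k:ℝ) * (2 * Real.pi) := by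
      have := hk
      rw [show ((3 * φ : ℝ):ℂ) * Complex.I + (k:ℂ) * (2 * ↑Real.pi * Complex.I) =
        ((3 * φ + (k:ℝ) * (2 * Real.pi) : ℝ):ℂ) * Complex.I by push_cast; ring] at this
      have := mul_right_cancel₀ Complex.I_ne_zero this
      exact_mod_cast this
    rw [hkr, hφ]
    ring
end

section
/- Let n ≥ 2 be an integer, let μ be an even integer with 2 ≤ μ ≤ q−2, and let θ, φ be real numbers. Setting h = q^{1/2} exp(iθ) and k = q^{1/2} exp(iφ), one has | Re( conj(h) a_μ − conj(k) a_μ ) | ≤ q^{1/2} | sin((φ − θ)/2) | / cos( πμ / (2(q−1)) ). -/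
lemma cf_two_sin (z : ℂ) :
    Complex.exp (z * Complex.I) - Complex.exp (-z * Complex.I) = 2 * Complex.sin z * Complex.I := by
  rw [Complex.sin]
  linear_combination (Complex.exp (z * Complex.I) - Complex.exp (-z * Complex.I)) * Complex.I_sq

lemma cf_abs_exp_sub_one (y : ℝ) :
    ‖Complex.exp (↑y * Complex.I) - 1‖ = 2 * |Real.sin (y / 2)| := by
  have h1 : Complex.exp (↑y * Complex.I) - 1
      = Complex.exp (↑(y/2) * Complex.I) * (Complex.exp (↑(y/2) * Complex.I) - Complex.exp (-↑(y/2) * Complex.I)) := by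
    rw [mul_sub, ← Complex.exp_add, ← Complex.exp_add]
    push_cast
    ring_nf
    simp [Complex.exp_zero]
    ring
  rw [h1, cf_two_sin, norm_mul, Complex.norm_exp_ofReal_mul_I, one_mul, norm_mul, norm_mul,
    ← Complex.ofReal_sin, Complex.norm_real, Real.norm_eq_abs, Complex.norm_I, Complex.norm_two]
  ring

lemma cf_abs_zeta_pow (n : ℕ) (m : ℤ) (hN : ((2:ℝ)^n - 1) ≠ 0) :
    ‖cfZeta n ^ m - 1‖
      = 2 * |Real.sin ((m : ℝ) * Real.pi / ((2:ℝ)^n - 1))| := by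
  have hz : cfZeta n ^ m
      = Complex.exp (↑((m : ℝ) * (2 * Real.pi / ((2:ℝ)^n - 1))) * Complex.I) := by
    rw [cfZeta, ← Complex.exp_int_mul]
    congr 1
    push_cast
    field_simp
  rw [hz, cf_abs_exp_sub_one,
    show ((m:ℝ) * (2 * Real.pi / ((2:ℝ)^n - 1))) / 2 = (m:ℝ) * Real.pi / ((2:ℝ)^n - 1) by
      field_simp]

/-- For `n ≥ 2`, even `μ` with `2 ≤ μ ≤ q−2`, and real `θ, φ`, putting
`h = q^{1/2} e^{iθ}` and `k = q^{1/2} e^{iφ}`, one has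
`|Re(conj(h) a_μ − conj(k) a_μ)| ≤ q^{1/2} |sin((φ−θ)/2)| / cos(πμ/(2(q−1)))`. -/
theorem stmt_15 (n : ℕ) (hn : 2 ≤ n) (μ : ℕ) (hμ2 : 2 ≤ μ) (hμq : μ ≤ 2 ^ n - 2)
    (hμeven : Even μ) (θ φ : ℝ)
    (h k : ℂ)
    (hh : h = Real.sqrt (2 ^ n) * Complex.exp (θ * Complex.I))
    (hk : k = Real.sqrt (2 ^ n) * Complex.exp (φ * Complex.I)) :
    |((starRingEnd ℂ) h * cfA n μ - (starRingEnd ℂ) k * cfA n μ).re| ≤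
      Real.sqrt (2 ^ n) * |Real.sin ((φ - θ) / 2)| /
        Real.cos (Real.pi * μ / (2 * ((2 : ℝ) ^ n - 1))) := by
  obtain ⟨t, ht⟩ := hμeven
  have h2n : (4:ℝ) ≤ (2:ℝ)^n := by
    calc (4:ℝ) = 2^2 := by norm_num
    _ ≤ 2^n := pow_le_pow_right₀ (by norm_num) hn
  have hN0 : (0:ℝ) < (2:ℝ)^n - 1 := by linarith
  have hNne : ((2:ℝ)^n - 1) ≠ 0 := ne_of_gt hN0
  have h2nn : (2:ℕ) ≤ 2^n := by
    calc (2:ℕ) ≤ 2^2 := by norm_num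
    _ ≤ 2^n := Nat.pow_le_pow_right (by norm_num) hn
  have hμR : (μ:ℝ) ≤ (2:ℝ)^n - 2 := by
    have h1 : (μ:ℝ) ≤ ((2^n - 2 : ℕ) : ℝ) := Nat.cast_le.mpr hμq
    rw [Nat.cast_sub h2nn] at h1
    push_cast at h1
    exact h1
  set x : ℝ := Real.pi * μ / (2 * ((2:ℝ)^n - 1)) with hxdef
  have hμ0 : (0:ℝ) < μ := by positivity
  have hx0 : 0 < x := by
    rw [hxdef]; positivity
  have hμltN : (μ:ℝ) < (2:ℝ)^n - 1 := by linarith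
  have hx2 : x < Real.pi / 2 := by
    rw [hxdef, div_lt_div_iff₀ (by positivity) (by norm_num)]
    nlinarith [Real.pi_pos]
  have hcos : 0 < Real.cos x := Real.cos_pos_of_mem_Ioo ⟨by linarith [Real.pi_pos], hx2⟩
  have hsin : 0 < Real.sin x := Real.sin_pos_of_pos_of_lt_pi hx0 (by linarith [Real.pi_pos])
  have h2x : 2 * x < Real.pi := by linarith
  have hsin2 : 0 < Real.sin (2*x) := Real.sin_pos_of_pos_of_lt_pi (by linarith) h2x
  have hpow : (2:ℝ)^n = 2 * 2^(n-1) := by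
    conv_lhs => rw [show n = (n-1)+1 by omega]
    rw [pow_succ]; ring
  have hμt : (μ:ℝ) = 2*t := by rw [ht]; push_cast; ring
  have hpowZ : (((2:ℤ)^(n-1) : ℤ) : ℝ) = (2:ℝ)^(n-1) := by push_cast; ring
  -- numerator
  have hnum : ‖cfZeta n ^ (-((μ : ℤ) * ((2 : ℤ) ^ (n - 1) - 1))) - 1‖
      = 2 * Real.sin x := by
    rw [cf_abs_zeta_pow n _ hNne]
    have hm : ((-((μ : ℤ) * ((2 : ℤ) ^ (n - 1) - 1)) : ℤ) : ℝ) * Real.pi / ((2:ℝ)^n - 1)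
        = x - t * Real.pi := by
      have hPne : (2:ℝ) * 2^(n-1) - 1 ≠ 0 := by rw [← hpow]; exact hNne
      push_cast
      rw [hxdef, hμt, hpow]
      field_simp
      ring
    rw [hm]
    have e1 : |Real.sin (x - t * Real.pi)| = |Real.sin (((t:ℤ):ℝ) * Real.pi - x)| := by
      rw [show ((t:ℤ):ℝ) * Real.pi - x = -(x - t * Real.pi) by push_cast; ring,
        Real.sin_neg, abs_neg]
    rw [e1, Real.sin_int_mul_pi_sub, abs_neg, abs_mul]
    simp [zpow_natCast, abs_pow, abs_of_pos hsin]
  -- denominator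
  have hden : ‖1 - cfZeta n ^ (-(μ:ℤ))‖ = 2 * Real.sin (2*x) := by
    rw [norm_sub_rev, cf_abs_zeta_pow n _ hNne]
    have hm : ((-(μ:ℤ) : ℤ) : ℝ) * Real.pi / ((2:ℝ)^n - 1) = -(2*x) := by
      push_cast
      rw [hxdef]
      field_simp
    rw [hm, Real.sin_neg, abs_neg, abs_of_pos hsin2]
  have hsne : Real.sin x ≠ 0 := ne_of_gt hsin
  have hcne : Real.cos x ≠ 0 := ne_of_gt hcos
  have habsA : ‖cfA n μ‖ = 1 / (2 * Real.cos x) := by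
    rw [cfA, norm_div, hnum, hden, Real.sin_two_mul]
    field_simp
  -- difference of conjugates
  have hdiff : (starRingEnd ℂ) h - (starRingEnd ℂ) k
      = (↑(Real.sqrt (2^n)) * Complex.exp (↑(-φ) * Complex.I)) * (Complex.exp (↑(φ-θ) * Complex.I) - 1) := by
    rw [hh, hk, map_mul, map_mul, ← Complex.exp_conj, ← Complex.exp_conj]
    simp only [map_mul, Complex.conj_ofReal, Complex.conj_I]
    have e2 : Complex.exp (↑(-φ) * Complex.I) * Complex.exp (↑(φ-θ) * Complex.I)
        = Complex.exp (↑θ * -Complex.I) := by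
      rw [← Complex.exp_add]; congr 1; push_cast; ring
    have e3 : Complex.exp (↑(-φ) * Complex.I) = Complex.exp (↑φ * -Complex.I) := by
      congr 1; push_cast; ring
    linear_combination -(↑(Real.sqrt (2^n)) : ℂ) * e2 + (↑(Real.sqrt (2^n)) : ℂ) * e3
  have habsdiff : ‖(starRingEnd ℂ) h - (starRingEnd ℂ) k‖
      = Real.sqrt (2^n) * (2 * |Real.sin ((φ-θ)/2)|) := by
    rw [hdiff, norm_mul, norm_mul, Complex.norm_real, Real.norm_eq_abs, Complex.norm_exp_ofReal_mul_I,
      cf_abs_exp_sub_one, abs_of_nonneg (Real.sqrt_nonneg _), mul_one]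
  have key : (starRingEnd ℂ) h * cfA n μ - (starRingEnd ℂ) k * cfA n μ
      = ((starRingEnd ℂ) h - (starRingEnd ℂ) k) * cfA n μ := by ring
  calc |((starRingEnd ℂ) h * cfA n μ - (starRingEnd ℂ) k * cfA n μ).re|
      ≤ ‖(starRingEnd ℂ) h * cfA n μ - (starRingEnd ℂ) k * cfA n μ‖ :=
        Complex.abs_re_le_norm _
    _ = ‖(starRingEnd ℂ) h - (starRingEnd ℂ) k‖ * ‖cfA n μ‖ := by
        rw [key, norm_mul]
    _ = Real.sqrt (2^n) * (2 * |Real.sin ((φ-θ)/2)|) * (1 / (2 * Real.cos x)) := by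
        rw [habsdiff, habsA]
    _ = Real.sqrt (2^n) * |Real.sin ((φ-θ)/2)| / Real.cos x := by
        field_simp
end
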